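/- arXiv:2504.10491 — 3 statements merged into one kernel-verified Lean document; each statement's English description precedes it below -/
import Mathlib

section
/- Let η_e = !![e₀+e₁, e₂; e₂, e₀−e₁] be an effect with e₀ > 0 and effect vector v_e = (e₁/e₀, e₂/e₀) satisfying ‖v_e‖ < 1, and let ρ_s be the density matrix with Bloch vector v_s, ‖v_s‖ ≤ 1. Then the Lüders post-measurement matrix satisfies η_e^{1/2} ρ_s η_e^{1/2} = e₀(1 + v_e·v_s) · ρ', where ρ' is the density matrix whose Bloch vector is the Einstein–Poincaré relativistic sum v_e ⊕ v_s := (1/(1 + v_e·v_s))·{ v_e + (1/γ)·v_s + (γ/(1+γ))·(v_e·v_s)·v_e }, with γ = 1/√(1 − ‖v_e‖²). -/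
/-!
Writing `u = v_e`, `δ = 1/γ = √(1 - ‖u‖²)` and `σ` for the real Pauli matrices, `η_e = e₀ (1 + u·σ)`.
By Cayley–Hamilton every positive semidefinite `2 × 2` matrix `M` satisfies
`(M + √(det M))² = (tr M + 2√(det M)) M`, so `η_e^{1/2}` is a positive multiple of
`η_e + e₀ δ = e₀ ((1 + δ) + u·σ)`. Expanding `((1 + δ) + u·σ)(1 + s·σ)((1 + δ) + u·σ)` with the
Pauli relations and `‖u‖² = 1 - δ²` gives `2(1 + δ)` times `(1 + u·s) + (u + δ s + (u·s)/(1 + δ) u)·σ`,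
and `γ/(1 + γ) = 1/(1 + δ)` identifies the vector part with `(1 + u·s) (u ⊕ s)`.
-/

/-- The Lorentz factor `γ = 1/√(1 − ‖u‖²)` of a vector `u = (u₁,u₂)`. -/
noncomputable def lorentzGamma (u₁ u₂ : ℝ) : ℝ :=
  1 / Real.sqrt (1 - (u₁ ^ 2 + u₂ ^ 2))

/-- First component of the Einstein–Poincaré relativistic sum `u ⊕ v`. -/
noncomputable def relSum₁ (u₁ u₂ v₁ v₂ : ℝ) : ℝ :=
  (1 / (1 + (u₁ * v₁ + u₂ * v₂))) *
    (u₁ + (1 / lorentzGamma u₁ u₂) * v₁ +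
      (lorentzGamma u₁ u₂ / (1 + lorentzGamma u₁ u₂)) * (u₁ * v₁ + u₂ * v₂) * u₁)

/-- Second component of the Einstein–Poincaré relativistic sum `u ⊕ v`. -/
noncomputable def relSum₂ (u₁ u₂ v₁ v₂ : ℝ) : ℝ :=
  (1 / (1 + (u₁ * v₁ + u₂ * v₂))) *
    (u₂ + (1 / lorentzGamma u₁ u₂) * v₂ +
      (lorentzGamma u₁ u₂ / (1 + lorentzGamma u₁ u₂)) * (u₁ * v₁ + u₂ * v₂) * u₂)

open Matrix
open scoped MatrixOrder

namespace Matrix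

lemma mul_self_fin_two (M : Matrix (Fin 2) (Fin 2) ℝ) :
    M * M = M.trace • M - M.det • 1 := by
  have h := M.aeval_self_charpoly
  simp only [charpoly_fin_two, map_add, map_sub, map_mul, Polynomial.aeval_C, Polynomial.aeval_X,
    Algebra.algebraMap_eq_smul_one, smul_mul_assoc, one_mul, sq] at h
  rw [← sub_eq_zero, ← h]
  abel

lemma add_sqrt_det_smul_one_mul_self (M : Matrix (Fin 2) (Fin 2) ℝ) (hdet : 0 ≤ M.det) :
    (M + √M.det • 1) * (M + √M.det • 1) = (M.trace + 2 * √M.det) • M := by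
  have hsq : √M.det * √M.det = M.det := Real.mul_self_sqrt hdet
  simp only [add_mul, mul_add, smul_add, mul_self_fin_two, smul_mul_assoc, mul_smul_comm,
    one_mul, mul_one, smul_smul, hsq, add_smul, two_mul]
  abel

lemma PosSemidef.sqrt_fin_two {M : Matrix (Fin 2) (Fin 2) ℝ} (hM : M.PosSemidef) :
    CFC.sqrt M = (√(M.trace + 2 * √M.det))⁻¹ • (M + √M.det • 1) := by
  have hpsd : ((√(M.trace + 2 * √M.det))⁻¹ • (M + √M.det • 1)).PosSemidef :=
    (hM.add (PosSemidef.one.smul (Real.sqrt_nonneg _))).smul (inv_nonneg.2 (Real.sqrt_nonneg _))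
  rw [CFC.sqrt_eq_iff M _ hM.nonneg hpsd.nonneg, smul_mul_smul_comm,
    add_sqrt_det_smul_one_mul_self M hM.det_nonneg, smul_smul]
  have htr : 0 ≤ M.trace + 2 * √M.det := add_nonneg hM.trace_nonneg (by positivity)
  rcases htr.eq_or_lt with hzero | hpos
  · have : M.trace = 0 := by linarith [hM.trace_nonneg, Real.sqrt_nonneg M.det]
    rw [hM.trace_eq_zero_iff.1 this, smul_zero]
  · rw [← mul_inv, Real.mul_self_sqrt hpos.le, inv_mul_cancel₀ hpos.ne', one_smul]

end Matrix

/-- `blochMatrix a x y = a • 1 + x • σ_z + y • σ_x`, so that `η_e = blochMatrix e₀ e₁ e₂` and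
`ρ_s = (1/2) • blochMatrix 1 s₁ s₂`. -/
def blochMatrix (a x y : ℝ) : Matrix (Fin 2) (Fin 2) ℝ :=
  !![a + x, y; y, a - x]

lemma smul_blochMatrix (c a x y : ℝ) :
    c • blochMatrix a x y = blochMatrix (c * a) (c * x) (c * y) := by
  ext i j; fin_cases i <;> fin_cases j <;> simp [blochMatrix] <;> ring

lemma blochMatrix_add_smul_one (a x y c : ℝ) :
    blochMatrix a x y + c • 1 = blochMatrix (a + c) x y := by
  ext i j; fin_cases i <;> fin_cases j <;> simp [blochMatrix] <;> ring

lemma trace_blochMatrix (a x y : ℝ) : (blochMatrix a x y).trace = 2 * a := by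
  simp [blochMatrix, trace_fin_two]; ring

lemma det_blochMatrix (a x y : ℝ) : (blochMatrix a x y).det = a ^ 2 - (x ^ 2 + y ^ 2) := by
  simp [blochMatrix, det_fin_two]; ring

/-- With `U = x • σ_z + y • σ_x` and `S = s • σ_z + t • σ_x` this is
`(a + U)(b + S)(a + U) = (a² + |U|²) b + 2a (U·S) + (a² - |U|²) S + 2(ab + U·S) U`,
which follows from `U² = |U|²` and `US + SU = 2 (U·S)`. -/
lemma blochMatrix_mul_mul_self (a x y b s t : ℝ) :
    blochMatrix a x y * blochMatrix b s t * blochMatrix a x y =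
      blochMatrix ((a ^ 2 + (x ^ 2 + y ^ 2)) * b + 2 * a * (x * s + y * t))
        ((a ^ 2 - (x ^ 2 + y ^ 2)) * s + 2 * (a * b + (x * s + y * t)) * x)
        ((a ^ 2 - (x ^ 2 + y ^ 2)) * t + 2 * (a * b + (x * s + y * t)) * y) := by
  ext i j; fin_cases i <;> fin_cases j <;> simp [blochMatrix, mul_apply, Fin.sum_univ_two] <;> ring

lemma one_add_dot_pos {u₁ u₂ v₁ v₂ : ℝ} (hu : u₁ ^ 2 + u₂ ^ 2 < 1) (hv : v₁ ^ 2 + v₂ ^ 2 ≤ 1) :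
    0 < 1 + (u₁ * v₁ + u₂ * v₂) := by
  nlinarith [sq_nonneg (u₁ + v₁), sq_nonneg (u₂ + v₂)]

lemma blochMatrix_mul_mul_self_eq_relSum {u₁ u₂ v₁ v₂ : ℝ} (hu : u₁ ^ 2 + u₂ ^ 2 < 1)
    (huv : 1 + (u₁ * v₁ + u₂ * v₂) ≠ 0) :
    blochMatrix (1 + √(1 - (u₁ ^ 2 + u₂ ^ 2))) u₁ u₂ * blochMatrix 1 v₁ v₂ *
        blochMatrix (1 + √(1 - (u₁ ^ 2 + u₂ ^ 2))) u₁ u₂ =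
      (2 * (1 + √(1 - (u₁ ^ 2 + u₂ ^ 2))) * (1 + (u₁ * v₁ + u₂ * v₂))) •
        blochMatrix 1 (relSum₁ u₁ u₂ v₁ v₂) (relSum₂ u₁ u₂ v₁ v₂) := by
  set δ := √(1 - (u₁ ^ 2 + u₂ ^ 2)) with hδ_def
  have hδ : 0 < δ := Real.sqrt_pos.2 (by linarith)
  have hδ2 : δ ^ 2 = 1 - (u₁ ^ 2 + u₂ ^ 2) := Real.sq_sqrt (by linarith)
  have hγ : lorentzGamma u₁ u₂ = 1 / δ := rfl
  rw [blochMatrix_mul_mul_self, smul_blochMatrix]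
  unfold relSum₁ relSum₂
  rw [hγ]
  congr 1
  · linear_combination hδ2
  · field_simp
    linear_combination -(v₁ * (1 + δ)) * hδ2
  · field_simp
    linear_combination -(v₂ * (1 + δ)) * hδ2

theorem luders_relativistic_sum_general (e₀ e₁ e₂ s₁ s₂ : ℝ) (he₀ : 0 < e₀)
    (η q : Matrix (Fin 2) (Fin 2) ℝ)
    (hη : η = !![e₀ + e₁, e₂; e₂, e₀ - e₁])
    (hps : η.PosSemidef)
    (hve : (e₁ / e₀) ^ 2 + (e₂ / e₀) ^ 2 < 1)
    (hq : q.PosSemidef) (hq2 : q * q = η)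
    (hs : s₁ ^ 2 + s₂ ^ 2 ≤ 1) :
    q * ((1 / 2 : ℝ) • !![1 + s₁, s₂; s₂, 1 - s₁]) * q =
      (e₀ * (1 + ((e₁ / e₀) * s₁ + (e₂ / e₀) * s₂))) •
        ((1 / 2 : ℝ) •
          !![1 + relSum₁ (e₁ / e₀) (e₂ / e₀) s₁ s₂,
              relSum₂ (e₁ / e₀) (e₂ / e₀) s₁ s₂;
              relSum₂ (e₁ / e₀) (e₂ / e₀) s₁ s₂,
              1 - relSum₁ (e₁ / e₀) (e₂ / e₀) s₁ s₂]) := by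
  change q * ((1 / 2 : ℝ) • blochMatrix 1 s₁ s₂) * q =
    _ • ((1 / 2 : ℝ) • blochMatrix 1 (relSum₁ _ _ s₁ s₂) (relSum₂ _ _ s₁ s₂))
  set u₁ := e₁ / e₀
  set u₂ := e₂ / e₀
  set δ := √(1 - (u₁ ^ 2 + u₂ ^ 2)) with hδ_def
  have hδ : 0 < δ := Real.sqrt_pos.2 (by linarith)
  have hη' : η = e₀ • blochMatrix 1 u₁ u₂ := by
    rw [hη, smul_blochMatrix]
    simp only [u₁, u₂, mul_one, mul_div_cancel₀ _ he₀.ne']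
    rfl
  have hsqrt_det : √η.det = e₀ * δ := by
    rw [hη', smul_blochMatrix, det_blochMatrix,
      show (e₀ * 1) ^ 2 - ((e₀ * u₁) ^ 2 + (e₀ * u₂) ^ 2) = e₀ ^ 2 * (1 - (u₁ ^ 2 + u₂ ^ 2)) by ring,
      Real.sqrt_mul (sq_nonneg _), Real.sqrt_sq he₀.le]
  have hq' : q = (√(2 * e₀ * (1 + δ)))⁻¹ • e₀ • blochMatrix (1 + δ) u₁ u₂ := by
    rw [← (CFC.sqrt_eq_iff η q hps.nonneg hq.nonneg).2 hq2, hps.sqrt_fin_two, hsqrt_det, hη',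
      smul_blochMatrix, trace_blochMatrix, blochMatrix_add_smul_one,
      show 2 * (e₀ * 1) + 2 * (e₀ * δ) = 2 * e₀ * (1 + δ) by ring,
      show e₀ * 1 + e₀ * δ = e₀ * (1 + δ) by ring, ← smul_blochMatrix]
  simp only [hq', smul_mul_assoc, mul_smul_comm, smul_smul]
  rw [blochMatrix_mul_mul_self_eq_relSum hve (one_add_dot_pos hve hs).ne', ← hδ_def, smul_smul]
  congr 1
  have hc : √(2 * e₀ * (1 + δ)) ^ 2 = 2 * e₀ * (1 + δ) := Real.sq_sqrt (by positivity)
  clear_value u₁ u₂ δ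
  field_simp
  rw [hc]

/-- The Lüders operation of an effect `η_e` (with `e₀ > 0`, `‖v_e‖ < 1`) on a density
matrix `ρ_s` yields `e₀(1 + v_e·v_s)` times the density matrix whose Bloch vector is
the Einstein–Poincaré relativistic sum `v_e ⊕ v_s`. -/
theorem luders_relativistic_sum (e₀ e₁ e₂ s₁ s₂ : ℝ) (he₀ : 0 < e₀)
    (η q : Matrix (Fin 2) (Fin 2) ℝ)
    (hη : η = !![e₀ + e₁, e₂; e₂, e₀ - e₁])
    (hps : η.PosSemidef)
    (hps' : ((1 : Matrix (Fin 2) (Fin 2) ℝ) - η).PosSemidef)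
    (hve : (e₁ / e₀) ^ 2 + (e₂ / e₀) ^ 2 < 1)
    (hq : q.PosSemidef) (hq2 : q * q = η)
    (hs : s₁ ^ 2 + s₂ ^ 2 ≤ 1) :
    q * ((1 / 2 : ℝ) • !![1 + s₁, s₂; s₂, 1 - s₁]) * q =
      (e₀ * (1 + ((e₁ / e₀) * s₁ + (e₂ / e₀) * s₂))) •
        ((1 / 2 : ℝ) •
          !![1 + relSum₁ (e₁ / e₀) (e₂ / e₀) s₁ s₂,
              relSum₂ (e₁ / e₀) (e₂ / e₀) s₁ s₂;
              relSum₂ (e₁ / e₀) (e₂ / e₀) s₁ s₂,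
              1 - relSum₁ (e₁ / e₀) (e₂ / e₀) s₁ s₂]) :=
  luders_relativistic_sum_general e₀ e₁ e₂ s₁ s₂ he₀ η q hη hps hve hq hq2 hs
end

section
/- Let η_e = !![e₀+e₁, e₂; e₂, e₀−e₁] be an effect with e₀ > 0, v_e = (e₁/e₀, e₂/e₀), ‖v_e‖ < 1 and γ = 1/√(1 − ‖v_e‖²), and let ρ_s be a density matrix with Bloch vector v_s = (s₁,s₂). Writing χ(M) = (m₀, m₁, m₂) ∈ ℝ³ for a symmetric matrix M = !![m₀+m₁, m₂; m₂, m₀−m₁], the Lüders operation is a normalized Lorentz boost: χ(η_e^{1/2} ρ_s η_e^{1/2}) = (e₀/γ) · B(v_e) · (1/2)·(1, s₁, s₂)ᵗ, where B(v_e) is the 3×3 Lorentz boost matrix with block form [[γ, γ v_eᵗ], [γ v_e, Id₂ + (γ²/(1+γ))·v_e v_eᵗ]]. -/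
open Matrix

/-- The linear isomorphism `χ : H(2,ℝ) → ℝ³`,
`!![m₀+m₁, m₂; m₂, m₀−m₁] ↦ (m₀, m₁, m₂)`. -/
noncomputable def chi (M : Matrix (Fin 2) (Fin 2) ℝ) : Fin 3 → ℝ :=
  ![(M 0 0 + M 1 1) / 2, (M 0 0 - M 1 1) / 2, M 0 1]

/-- The 3×3 Lorentz boost matrix `B(u)` in the direction `u = (u₁,u₂)`. -/
noncomputable def boost (u₁ u₂ : ℝ) : Matrix (Fin 3) (Fin 3) ℝ :=
  !![lorentzGamma u₁ u₂, lorentzGamma u₁ u₂ * u₁, lorentzGamma u₁ u₂ * u₂;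
     lorentzGamma u₁ u₂ * u₁,
       1 + (lorentzGamma u₁ u₂ ^ 2 / (1 + lorentzGamma u₁ u₂)) * (u₁ * u₁),
       (lorentzGamma u₁ u₂ ^ 2 / (1 + lorentzGamma u₁ u₂)) * (u₁ * u₂);
     lorentzGamma u₁ u₂ * u₂,
       (lorentzGamma u₁ u₂ ^ 2 / (1 + lorentzGamma u₁ u₂)) * (u₂ * u₁),
       1 + (lorentzGamma u₁ u₂ ^ 2 / (1 + lorentzGamma u₁ u₂)) * (u₂ * u₂)]

/-!
A positive semidefinite square root of a `2 × 2` matrix is, by Cayley–Hamilton, the affine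
expression `q = (η + √(det η) • 1) / √(tr η + 2 √(det η))`. For the effect `η_e` we have
`tr η = 2 e₀` and `√(det η) = D := √(e₀² - e₁² - e₂²) = e₀ / γ`, so `χ(q ρ_s q)` is an explicit
quadratic expression in `(e, s)`, while `(e₀ / γ) B(v_e)` has entries `e₀`, `eᵢ` and
`D δᵢⱼ + eᵢ eⱼ / (e₀ + D)`. The two sides then agree modulo `D² = e₀² - e₁² - e₂²`.
-/

namespace Matrix

theorem mul_self_fin_two_s14 {R : Type*} [CommRing R] (A : Matrix (Fin 2) (Fin 2) R) :
    A * A = A.trace • A - A.det • 1 := by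
  ext i j
  fin_cases i <;> fin_cases j <;>
    simp only [mul_apply, Fin.sum_univ_two, trace_fin_two, det_fin_two, sub_apply, smul_apply,
      smul_eq_mul, one_apply_eq, one_apply_ne, ne_eq, zero_ne_one, one_ne_zero, not_false_eq_true,
      mul_one, mul_zero, sub_zero, Fin.isValue, Fin.zero_eta, Fin.mk_one] <;> ring

theorem trace_mul_self_fin_two {R : Type*} [CommRing R] (A : Matrix (Fin 2) (Fin 2) R) :
    (A * A).trace = A.trace ^ 2 - 2 * A.det := by
  rw [mul_self_fin_two_s14, trace_sub, trace_smul, trace_smul, trace_one]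
  simp only [Fintype.card_fin, smul_eq_mul]
  push_cast
  ring

/-- By Cayley–Hamilton `η = tr q • q - det q • 1`, with `det q = √(det η)` and
`(tr q)² = tr η + 2 det q`. -/
theorem PosSemidef.eq_smul_add_of_mul_self_eq {q η : Matrix (Fin 2) (Fin 2) ℝ}
    (hq : q.PosSemidef) (hqη : q * q = η) (hη : 0 < η.trace) :
    q = (√(η.trace + 2 * √η.det))⁻¹ • (η + √η.det • 1) := by
  have hdet : q.det = √η.det := by
    rw [← hqη, det_mul, ← sq, Real.sqrt_sq hq.det_nonneg]
  have htr : q.trace = √(η.trace + 2 * √η.det) := by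
    rw [← hdet, ← hqη, trace_mul_self_fin_two, sub_add_cancel, Real.sqrt_sq hq.trace_nonneg]
  have htr_ne : q.trace ≠ 0 := by
    intro h
    rw [← hqη, trace_mul_self_fin_two, h] at hη
    nlinarith [hq.det_nonneg]
  rw [← htr, ← hdet, ← hqη, mul_self_fin_two_s14, sub_add_cancel, smul_smul,
    inv_mul_cancel₀ htr_ne, one_smul]

end Matrix

theorem lorentzGamma_div {e₀ e₁ e₂ D : ℝ} (he₀ : 0 < e₀) (hD : 0 ≤ D)
    (hD2 : D ^ 2 = e₀ ^ 2 - e₁ ^ 2 - e₂ ^ 2) :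
    lorentzGamma (e₁ / e₀) (e₂ / e₀) = e₀ / D := by
  rw [lorentzGamma, show 1 - ((e₁ / e₀) ^ 2 + (e₂ / e₀) ^ 2) = (D / e₀) ^ 2 by
    field_simp; linear_combination -hD2, Real.sqrt_sq (by positivity), one_div_div]

theorem div_lorentzGamma_smul_boost {e₀ e₁ e₂ D : ℝ} (he₀ : 0 < e₀) (hD : 0 < D)
    (hD2 : D ^ 2 = e₀ ^ 2 - e₁ ^ 2 - e₂ ^ 2) :
    (e₀ / lorentzGamma (e₁ / e₀) (e₂ / e₀)) • boost (e₁ / e₀) (e₂ / e₀) =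
      !![e₀, e₁, e₂;
         e₁, D + e₁ ^ 2 / (e₀ + D), e₁ * e₂ / (e₀ + D);
         e₂, e₁ * e₂ / (e₀ + D), D + e₂ ^ 2 / (e₀ + D)] := by
  rw [boost, lorentzGamma_div he₀ hD.le hD2]
  ext i j
  fin_cases i <;> fin_cases j <;>
    simp only [Matrix.smul_apply, of_apply, cons_val', cons_val, cons_val_zero, cons_val_one,
      cons_val_fin_one, smul_eq_mul, Fin.isValue, Fin.zero_eta, Fin.mk_one, Fin.reduceFinMk] <;>
    field_simp <;> ring

theorem chi_conj_eq_mulVec {e₀ e₁ e₂ s₁ s₂ D t : ℝ} (ht : t ≠ 0)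
    (ht2 : t ^ 2 = 2 * e₀ + 2 * D) (hD2 : D ^ 2 = e₀ ^ 2 - e₁ ^ 2 - e₂ ^ 2) :
    chi ((t⁻¹ • (!![e₀ + e₁, e₂; e₂, e₀ - e₁] + D • 1)) *
        ((1 / 2 : ℝ) • !![1 + s₁, s₂; s₂, 1 - s₁]) *
        (t⁻¹ • (!![e₀ + e₁, e₂; e₂, e₀ - e₁] + D • 1))) =
      !![e₀, e₁, e₂;
         e₁, D + e₁ ^ 2 / (e₀ + D), e₁ * e₂ / (e₀ + D);
         e₂, e₁ * e₂ / (e₀ + D), D + e₂ ^ 2 / (e₀ + D)] *ᵥ ((1 / 2 : ℝ) • ![1, s₁, s₂]) := by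
  have he₀D : e₀ + D ≠ 0 := fun h ↦
    ht (pow_eq_zero_iff two_ne_zero |>.1 (by linear_combination ht2 + 2 * h))
  ext i
  fin_cases i <;>
    simp only [chi, mulVec, dotProduct, Fin.sum_univ_three, mul_apply, Fin.sum_univ_two, smul_add,
      smul_of, smul_cons, smul_eq_mul, smul_empty, Matrix.add_apply, Matrix.smul_apply, Pi.smul_apply,
      of_apply, cons_val', cons_val_fin_one, cons_val_zero, cons_val_one, cons_val, one_apply_eq,
      one_apply_ne, ne_eq, zero_ne_one, one_ne_zero, not_false_eq_true, mul_one, mul_zero, add_zero,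
      one_div, Fin.isValue, Fin.zero_eta, Fin.mk_one, Fin.reduceFinMk] <;> field_simp <;> rw [ht2]
  · linear_combination 2 * hD2
  · linear_combination -2 * s₁ * (e₀ + D) * hD2
  · linear_combination -s₂ * (e₀ + D) * hD2

theorem luders_is_normalized_boost_general (e₀ e₁ e₂ s₁ s₂ : ℝ) (he₀ : 0 < e₀)
    (η q : Matrix (Fin 2) (Fin 2) ℝ)
    (hη : η = !![e₀ + e₁, e₂; e₂, e₀ - e₁])
    (hve : (e₁ / e₀) ^ 2 + (e₂ / e₀) ^ 2 < 1)
    (hq : q.PosSemidef) (hq2 : q * q = η) :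
    chi (q * ((1 / 2 : ℝ) • !![1 + s₁, s₂; s₂, 1 - s₁]) * q) =
      (e₀ / lorentzGamma (e₁ / e₀) (e₂ / e₀)) •
        (boost (e₁ / e₀) (e₂ / e₀) *ᵥ ((1 / 2 : ℝ) • ![1, s₁, s₂])) := by
  have he : e₁ ^ 2 + e₂ ^ 2 < e₀ ^ 2 := by
    rwa [div_pow, div_pow, ← add_div, div_lt_one (by positivity)] at hve
  set D := √(e₀ ^ 2 - e₁ ^ 2 - e₂ ^ 2)
  have hD : 0 < D := Real.sqrt_pos.2 (by linarith)
  have hD2 : D ^ 2 = e₀ ^ 2 - e₁ ^ 2 - e₂ ^ 2 := Real.sq_sqrt (by linarith)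
  have htr : η.trace = 2 * e₀ := by rw [hη, trace_fin_two_of]; ring
  have hdet : η.det = D ^ 2 := by rw [hη, det_fin_two_of, hD2]; ring
  have ht : 0 < √(2 * e₀ + 2 * D) := Real.sqrt_pos.2 (by positivity)
  rw [hq.eq_smul_add_of_mul_self_eq hq2 (by rw [htr]; positivity), htr, hdet,
    Real.sqrt_sq hD.le, ← smul_mulVec, div_lorentzGamma_smul_boost he₀ hD hD2, hη]
  exact chi_conj_eq_mulVec ht.ne' (Real.sq_sqrt (by positivity)) hD2

/-- The Lüders operation of an effect is a normalized Lorentz boost: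
`χ(η_e^{1/2} ρ_s η_e^{1/2}) = (e₀/γ)·B(v_e)·(1/2)(1, s₁, s₂)ᵗ`. -/
theorem luders_is_normalized_boost (e₀ e₁ e₂ s₁ s₂ : ℝ) (he₀ : 0 < e₀)
    (η q : Matrix (Fin 2) (Fin 2) ℝ)
    (hη : η = !![e₀ + e₁, e₂; e₂, e₀ - e₁])
    (hps : η.PosSemidef)
    (hps' : ((1 : Matrix (Fin 2) (Fin 2) ℝ) - η).PosSemidef)
    (hve : (e₁ / e₀) ^ 2 + (e₂ / e₀) ^ 2 < 1)
    (hq : q.PosSemidef) (hq2 : q * q = η)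
    (hs : s₁ ^ 2 + s₂ ^ 2 ≤ 1) :
    chi (q * ((1 / 2 : ℝ) • !![1 + s₁, s₂; s₂, 1 - s₁]) * q) =
      (e₀ / lorentzGamma (e₁ / e₀) (e₂ / e₀)) •
        (boost (e₁ / e₀) (e₂ / e₀) *ᵥ ((1 / 2 : ℝ) • ![1, s₁, s₂])) :=
  luders_is_normalized_boost_general e₀ e₁ e₂ s₁ s₂ he₀ η q hη hve hq hq2
end

section
/- (Robustness of white patch brightness under achromatic illuminant.) Let η_o = !![o₀+o₁, o₂; o₂, o₀−o₁] and η_ι = !![ι₀+ι₁, ι₂; ι₂, ι₀−ι₁] be effects (observer and illuminant). The brightness of the color perceived from the white patch ρ₀ = (1/2)Id₂ lit by the illuminant and observed by the observer satisfies Tr( η_o^{1/2} (η_ι^{1/2} · (1/2)Id₂ · η_ι^{1/2}) η_o^{1/2} ) = o₀ι₀ + o₁ι₁ + o₂ι₂. Consequently, for fixed o₀ ∈ (0,1) and ι₀ > 0, this brightness is independent of (o₁,o₂) as (o₁,o₂) ranges over all values making η_o an effect if and only if ι₁ = ι₂ = 0, i.e., if and only if the illuminant is achromatic, in which case it equals o₀ι₀.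 -/
/-!
By cyclicity of the trace, the brightness of the white patch is `½ Tr(η_o η_ι)`, which for
matrices in Bloch form `e₀ Id + e₁ σ_z + e₂ σ_x` is the Euclidean pairing
`o₀ι₀ + o₁ι₁ + o₂ι₂`. Every `(o₁, o₂)` in the disc of radius `min o₀ (1 - o₀)` gives an effect,
so the brightness is independent of `(o₁, o₂)` exactly when `ι₁ = ι₂ = 0`.
-/

/-- `IsEffect e₀ e₁ e₂` means that `!![e₀+e₁, e₂; e₂, e₀−e₁]` satisfies
`0 ≤ η ≤ Id₂` in the Loewner order. -/
def IsEffect (e₀ e₁ e₂ : ℝ) : Prop :=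
  (!![e₀ + e₁, e₂; e₂, e₀ - e₁] : Matrix (Fin 2) (Fin 2) ℝ).PosSemidef ∧
    ((1 : Matrix (Fin 2) (Fin 2) ℝ) - !![e₀ + e₁, e₂; e₂, e₀ - e₁]).PosSemidef

open Matrix

lemma Matrix.posSemidef_fin_two_of {p q r : ℝ} (hp : 0 ≤ p) (hq : 0 ≤ q) (h : r ^ 2 ≤ p * q) :
    (!![p, r; r, q] : Matrix (Fin 2) (Fin 2) ℝ).PosSemidef := by
  rw [posSemidef_iff_dotProduct_mulVec]
  refine ⟨by ext i j; fin_cases i <;> fin_cases j <;> rfl, fun x => ?_⟩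
  have hform : star x ⬝ᵥ (!![p, r; r, q] *ᵥ x) = p * x 0 ^ 2 + 2 * r * (x 0 * x 1) + q * x 1 ^ 2 := by
    simp only [dotProduct, mulVec, Fin.sum_univ_two, star_trivial, of_apply, cons_val',
      cons_val_zero, cons_val_one, empty_val', cons_val_fin_one]
    ring
  rw [hform]
  rcases hp.eq_or_lt with rfl | hp
  · obtain rfl : r = 0 := by nlinarith [sq_nonneg r]
    nlinarith [mul_nonneg hq (sq_nonneg (x 1))]
  · -- completing the square: `p · (quadratic form) = (p x₀ + r x₁)² + (p q - r²) x₁²`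
    nlinarith [sq_nonneg (p * x 0 + r * x 1), mul_nonneg (sub_nonneg.mpr h) (sq_nonneg (x 1))]

lemma isEffect_of_sq_add_sq_le {e₀ e₁ e₂ : ℝ} (h₀ : 0 ≤ e₀) (h₁ : e₀ ≤ 1)
    (hlow : e₁ ^ 2 + e₂ ^ 2 ≤ e₀ ^ 2) (hup : e₁ ^ 2 + e₂ ^ 2 ≤ (1 - e₀) ^ 2) :
    IsEffect e₀ e₁ e₂ := by
  have hsub : (1 : Matrix (Fin 2) (Fin 2) ℝ) - !![e₀ + e₁, e₂; e₂, e₀ - e₁] =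
      !![1 - (e₀ + e₁), -e₂; -e₂, 1 - (e₀ - e₁)] := by
    ext i j; fin_cases i <;> fin_cases j <;> simp
  refine ⟨posSemidef_fin_two_of ?_ ?_ (by nlinarith), hsub ▸ posSemidef_fin_two_of ?_ ?_ (by nlinarith)⟩
  all_goals nlinarith [sq_nonneg e₂, sq_nonneg e₁]

lemma Matrix.trace_mul_mul_smul_one_mul_mul {n R : Type*} [Fintype n] [DecidableEq n] [CommRing R]
    (q r : Matrix n n R) (c : R) :
    (q * (r * (c • 1) * r) * q).trace = c * (q * q * (r * r)).trace := by
  rw [mul_smul_one, smul_mul_assoc, mul_smul_comm, smul_mul_assoc, trace_smul, smul_eq_mul,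
    trace_mul_cycle, Matrix.mul_assoc]

lemma Matrix.trace_bloch_mul_bloch {R : Type*} [CommRing R] (a₀ a₁ a₂ b₀ b₁ b₂ : R) :
    (!![a₀ + a₁, a₂; a₂, a₀ - a₁] * !![b₀ + b₁, b₂; b₂, b₀ - b₁]).trace =
      2 * (a₀ * b₀ + a₁ * b₁ + a₂ * b₂) := by
  rw [mul_fin_two, trace_fin_two_of]
  ring

lemma forall_isEffect_affine_eq_iff {o₀ : ℝ} (ho : o₀ ∈ Set.Ioo (0 : ℝ) 1) (c x y : ℝ) :
    (∀ a₁ a₂ b₁ b₂ : ℝ, IsEffect o₀ a₁ a₂ → IsEffect o₀ b₁ b₂ →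
        c + a₁ * x + a₂ * y = c + b₁ * x + b₂ * y) ↔ (x = 0 ∧ y = 0) := by
  obtain ⟨ho₀, ho₁⟩ := ho
  refine ⟨fun h => ?_, by rintro ⟨rfl, rfl⟩ _ _ _ _ _ _; ring⟩
  set ε := min o₀ (1 - o₀)
  have hε : 0 < ε := lt_min ho₀ (by linarith)
  have hεo : ε ≤ o₀ := min_le_left _ _
  have hεo' : ε ≤ 1 - o₀ := min_le_right _ _
  have effect (a₁ a₂ : ℝ) (hsq : a₁ ^ 2 + a₂ ^ 2 ≤ ε ^ 2) : IsEffect o₀ a₁ a₂ :=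
    isEffect_of_sq_add_sq_le ho₀.le ho₁.le (by nlinarith) (by nlinarith)
  have hx := h ε 0 0 0 (effect _ _ (by simp)) (effect _ _ (by simp [sq_nonneg]))
  have hy := h 0 ε 0 0 (effect _ _ (by simp)) (effect _ _ (by simp [sq_nonneg]))
  exact ⟨(mul_eq_zero.mp (by linarith : ε * x = 0)).resolve_left hε.ne',
    (mul_eq_zero.mp (by linarith : ε * y = 0)).resolve_left hε.ne'⟩

theorem whitePatch_brightness_general (o₀ o₁ o₂ ι₀ ι₁ ι₂ : ℝ)
    (qo qι : Matrix (Fin 2) (Fin 2) ℝ)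
    (hqo2 : qo * qo = !![o₀ + o₁, o₂; o₂, o₀ - o₁])
    (hqι2 : qι * qι = !![ι₀ + ι₁, ι₂; ι₂, ι₀ - ι₁]) :
    (qo * (qι * ((1 / 2 : ℝ) • (1 : Matrix (Fin 2) (Fin 2) ℝ)) * qι) * qo).trace =
        o₀ * ι₀ + o₁ * ι₁ + o₂ * ι₂ ∧
    (o₀ ∈ Set.Ioo (0 : ℝ) 1 → 0 < ι₀ →
      ((∀ a₁ a₂ b₁ b₂ : ℝ, IsEffect o₀ a₁ a₂ → IsEffect o₀ b₁ b₂ →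
          o₀ * ι₀ + a₁ * ι₁ + a₂ * ι₂ = o₀ * ι₀ + b₁ * ι₁ + b₂ * ι₂) ↔
        (ι₁ = 0 ∧ ι₂ = 0))) ∧
    (ι₁ = 0 → ι₂ = 0 →
      (qo * (qι * ((1 / 2 : ℝ) • (1 : Matrix (Fin 2) (Fin 2) ℝ)) * qι) * qo).trace =
        o₀ * ι₀) := by
  have hbright : (qo * (qι * ((1 / 2 : ℝ) • (1 : Matrix (Fin 2) (Fin 2) ℝ)) * qι) * qo).trace =
      o₀ * ι₀ + o₁ * ι₁ + o₂ * ι₂ := by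
    rw [trace_mul_mul_smul_one_mul_mul, hqo2, hqι2, trace_bloch_mul_bloch]
    ring
  refine ⟨hbright, fun ho _ => forall_isEffect_affine_eq_iff ho _ _ _, ?_⟩
  rintro rfl rfl
  rw [hbright]
  ring

/-- Robustness of white patch brightness under achromatic illuminant: the brightness of
the white patch `(1/2)·Id₂` lit by the illuminant `η_ι` and observed by `η_o` is
`o₀ι₀ + o₁ι₁ + o₂ι₂`; for fixed `o₀ ∈ (0,1)` and `ι₀ > 0` this quantity is independent
of the observer's effect vector iff the illuminant is achromatic (`ι₁ = ι₂ = 0`), in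
which case it equals `o₀ι₀`. -/
theorem whitePatch_brightness (o₀ o₁ o₂ ι₀ ι₁ ι₂ : ℝ)
    (ho : IsEffect o₀ o₁ o₂) (hι : IsEffect ι₀ ι₁ ι₂)
    (qo qι : Matrix (Fin 2) (Fin 2) ℝ)
    (hqo : qo.PosSemidef) (hqo2 : qo * qo = !![o₀ + o₁, o₂; o₂, o₀ - o₁])
    (hqι : qι.PosSemidef) (hqι2 : qι * qι = !![ι₀ + ι₁, ι₂; ι₂, ι₀ - ι₁]) :
    (qo * (qι * ((1 / 2 : ℝ) • (1 : Matrix (Fin 2) (Fin 2) ℝ)) * qι) * qo).trace =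
        o₀ * ι₀ + o₁ * ι₁ + o₂ * ι₂ ∧
    (o₀ ∈ Set.Ioo (0 : ℝ) 1 → 0 < ι₀ →
      ((∀ a₁ a₂ b₁ b₂ : ℝ, IsEffect o₀ a₁ a₂ → IsEffect o₀ b₁ b₂ →
          o₀ * ι₀ + a₁ * ι₁ + a₂ * ι₂ = o₀ * ι₀ + b₁ * ι₁ + b₂ * ι₂) ↔
        (ι₁ = 0 ∧ ι₂ = 0))) ∧
    (ι₁ = 0 → ι₂ = 0 →
      (qo * (qι * ((1 / 2 : ℝ) • (1 : Matrix (Fin 2) (Fin 2) ℝ)) * qι) * qo).trace =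
        o₀ * ι₀) :=
  whitePatch_brightness_general o₀ o₁ o₂ ι₀ ι₁ ι₂ qo qι hqo2 hqι2
end
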